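/- arXiv:1810.12978 — 4 statements merged into one kernel-verified Lean document; each statement's English description precedes it below -/
import Mathlib

section
/- For a prime p, real α > 0, and integer r < 0, define K_α(y) = [(1-p^α)/(1-p^{-α-1})·|y|_p^{-α-1} + p^{r(α+1)}·(1-p^α)/(1-p^{α+1})] for y in the ball |y|_p ≤ p^{-r} (and 0 outside). Then 0 < -∫_{1<|y|_p≤p^{-r}} K_α(y) dy < 1. -/
/-! On the shell `‖y‖ = p ^ (j + 1)` (`j < n := -r`), whose Haar measure is `p ^ (j + 1) - p ^ j`
because a ball of radius `p ^ k` is the disjoint union of `p ^ k` translates of `ℤ_[p]`, the kernel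
is constant: with `u = p ^ α` and `w = (u p)⁻¹` it equals `-c (w ^ j - w ^ n)`,
`c = (u - 1) / (u p - 1) > 0`. So `-∫ K_α = c ∑_{j<n} (p - 1) p ^ j (w ^ j - w ^ n)` is a sum of
positive terms, and dropping `w ^ n` bounds it by the geometric series
`c (p - 1) ∑ u⁻¹ ^ j ≤ (p - 1) u / (u p - 1) < 1`.
-/

open MeasureTheory Filter Topology

noncomputable section

variable (p : ℕ) [Fact p.Prime]

instance : MeasurableSpace ℚ_[p] := borel _
instance : BorelSpace ℚ_[p] := ⟨rfl⟩

/-- The closed unit ball of `ℚ_[p]` (i.e. `ℤ_p`) as a positive compact set. -/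
def padicUnitBall : TopologicalSpace.PositiveCompacts ℚ_[p] where
  carrier := Metric.closedBall 0 1
  isCompact' := isCompact_closedBall 0 1
  interior_nonempty' := ⟨0, mem_interior_iff_mem_nhds.2 (Metric.closedBall_mem_nhds 0 one_pos)⟩

/-- Haar measure on `ℚ_[p]` normalized so that `ℤ_p` has measure 1. -/
def μp : Measure ℚ_[p] := Measure.addHaarMeasure (padicUnitBall p)

/-- The heat kernel `Z_r(x,t) = ∫ χ(-xξ) e^{-t(⟨ξ⟩^α - p^{rα})} dξ`, where
`⟨ξ⟩ = max(|ξ|_p, p^r)`. -/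
def heatKernel (χ : AddChar ℚ_[p] ℂ) (r : ℤ) (α t : ℝ) (x : ℚ_[p]) : ℂ :=
  ∫ ξ, χ (-(x*ξ)) *
    Complex.exp (-((t * ((max ‖ξ‖ ((p:ℝ)^r)) ^ α - (p:ℝ) ^ ((r:ℝ)*α)) : ℝ) : ℂ)) ∂(μp p)

/-- The kernel `K_α(y)`, supported on the ball `|y|_p ≤ p^{-r}`. -/
def Kfun (r : ℤ) (α : ℝ) (y : ℚ_[p]) : ℝ :=
  if ‖y‖ ≤ (p:ℝ)^(-r) then
    (1 - (p:ℝ)^α)/(1 - (p:ℝ)^(-α-1)) * ‖y‖ ^ (-α-1)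
      + (p:ℝ)^((r:ℝ)*(α+1)) * (1 - (p:ℝ)^α)/(1 - (p:ℝ)^(α+1))
  else 0

/-- `u(x,t) = ∫_{|ξ|_p ≤ 1} χ(-xξ) e^{-t(⟨ξ⟩^α - p^{rα})} dξ`, the solution with initial
datum the indicator of the unit ball. -/
def uball (χ : AddChar ℚ_[p] ℂ) (r : ℤ) (α t : ℝ) (x : ℚ_[p]) : ℂ :=
  ∫ ξ in {ξ : ℚ_[p] | ‖ξ‖ ≤ 1}, χ (-(x*ξ)) *
    Complex.exp (-((t * ((max ‖ξ‖ ((p:ℝ)^r)) ^ α - (p:ℝ) ^ ((r:ℝ)*α)) : ℝ) : ℂ)) ∂(μp p)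

/-- The survival probability `S(t) = ∫_{|x|_p ≤ 1} u(x,t) dx`. -/
def Sfun (χ : AddChar ℚ_[p] ℂ) (r : ℤ) (α t : ℝ) : ℂ :=
  ∫ x in {x : ℚ_[p] | ‖x‖ ≤ 1}, uball p χ r α t x ∂(μp p)

/-- The solution `u(x,t) = (Z_r(·,t) ∗ φ)(x)` of the Cauchy problem, with `u(x,0) = φ(x)`. -/
def sol (χ : AddChar ℚ_[p] ℂ) (r : ℤ) (α : ℝ) (φ : ℚ_[p] → ℂ) (t : ℝ) (x : ℚ_[p]) : ℂ :=
  if t = 0 then φ x else ∫ y, heatKernel p χ r α t (x-y) * φ y ∂(μp p)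

/-- The pseudodifferential operator `H^α` with symbol `⟨ξ⟩^α - p^{rα}`:
`H^α g = 𝓕⁻¹[(⟨ξ⟩^α - p^{rα}) 𝓕g]`. -/
def Hop (χ : AddChar ℚ_[p] ℂ) (r : ℤ) (α : ℝ) (g : ℚ_[p] → ℂ) (x : ℚ_[p]) : ℂ :=
  ∫ ξ, χ (-(x*ξ)) * (((max ‖ξ‖ ((p:ℝ)^r)) ^ α - (p:ℝ)^((r:ℝ)*α) : ℝ) : ℂ) *
    (∫ y, χ (ξ*y) * g y ∂(μp p)) ∂(μp p)

/-- The Laplace transform `G_r(s)` of the density `g(t)`. -/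
def Gr (χ : AddChar ℚ_[p] ℂ) (r : ℤ) (α : ℝ) (s : ℝ) : ℂ :=
  ∫ y in {y : ℚ_[p] | 1 < ‖y‖ ∧ ‖y‖ ≤ (p:ℝ)^(-r)}, (Kfun p r α y : ℂ) *
    ∫ ξ in {ξ : ℚ_[p] | ‖ξ‖ ≤ 1},
      χ (-(ξ*y)) / ((s:ℂ) + (((max ‖ξ‖ ((p:ℝ)^r)) ^ α - (p:ℝ)^((r:ℝ)*α) : ℝ) : ℂ)) ∂(μp p) ∂(μp p)

open Metric

lemma one_lt_cast_prime : (1 : ℝ) < p := by exact_mod_cast (Fact.out : p.Prime).one_lt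

lemma norm_div_p_pow (x : ℚ_[p]) (k : ℕ) : ‖x / (p : ℚ_[p]) ^ k‖ = (p : ℝ) ^ k * ‖x‖ := by
  rw [norm_div, Padic.norm_p_pow, zpow_neg, zpow_natCast, div_inv_eq_mul, mul_comm]

lemma closedBall_pow_eq_iUnion (k : ℕ) :
    closedBall (0 : ℚ_[p]) ((p : ℝ) ^ k)
      = ⋃ m ∈ Finset.range (p ^ k), closedBall ((m : ℚ_[p]) / (p : ℚ_[p]) ^ k) 1 := by
  have hp : (p : ℚ_[p]) ^ k ≠ 0 := pow_ne_zero k (Nat.cast_ne_zero.2 (Fact.out : p.Prime).ne_zero)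
  have hpk : (0 : ℝ) < (p : ℝ) ^ k := pow_pos (zero_lt_one.trans (one_lt_cast_prime p)) k
  ext y
  simp only [mem_closedBall, dist_eq_norm, sub_zero, Set.mem_iUnion, Finset.mem_range]
  constructor
  · intro hy
    have hx : ‖(p : ℚ_[p]) ^ k * y‖ ≤ 1 := by
      rwa [norm_mul, Padic.norm_p_pow, zpow_neg, zpow_natCast, inv_mul_le_one₀ hpk]
    set x : ℤ_[p] := ⟨_, hx⟩
    refine ⟨x.appr k, x.appr_lt k, ?_⟩
    have happr : ‖(p : ℚ_[p]) ^ k * y - x.appr k‖ ≤ (p : ℝ) ^ (-k : ℤ) := by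
      have := (PadicInt.norm_le_pow_iff_mem_span_pow _ k).2 (x.appr_spec k)
      rwa [PadicInt.norm_def, PadicInt.coe_sub, PadicInt.coe_natCast] at this
    calc ‖y - (x.appr k : ℚ_[p]) / (p : ℚ_[p]) ^ k‖
        = ‖((p : ℚ_[p]) ^ k * y - x.appr k) / (p : ℚ_[p]) ^ k‖ := by
          rw [sub_div, mul_div_cancel_left₀ _ hp]
      _ ≤ (p : ℝ) ^ k * (p : ℝ) ^ (-k : ℤ) := by
          rw [norm_div_p_pow]; gcongr
      _ = 1 := by rw [zpow_neg, zpow_natCast, mul_inv_cancel₀ hpk.ne']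
  · rintro ⟨m, -, hm⟩
    calc ‖y‖ = ‖(y - m / (p : ℚ_[p]) ^ k) + m / (p : ℚ_[p]) ^ k‖ := by rw [sub_add_cancel]
      _ ≤ max ‖y - m / (p : ℚ_[p]) ^ k‖ ‖(m : ℚ_[p]) / (p : ℚ_[p]) ^ k‖ := Padic.nonarchimedean _ _
      _ ≤ (p : ℝ) ^ k := by
        rw [norm_div_p_pow]
        exact max_le (hm.trans (one_le_pow₀ (one_lt_cast_prime p).le))
          (mul_le_of_le_one_right hpk.le (IsUltrametricDist.norm_natCast_le_one ℚ_[p] m))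

lemma pairwiseDisjoint_closedBall_div_pow (k : ℕ) :
    (Finset.range (p ^ k) : Set ℕ).PairwiseDisjoint
      fun m => closedBall ((m : ℚ_[p]) / (p : ℚ_[p]) ^ k) 1 := by
  intro m hm m' hm' hne
  refine Set.disjoint_left.2 fun y hy hy' => hne ?_
  have hdist : dist ((m : ℚ_[p]) / (p : ℚ_[p]) ^ k) ((m' : ℚ_[p]) / (p : ℚ_[p]) ^ k) ≤ 1 :=
    (IsUltrametricDist.dist_triangle_max _ y _).trans
      (max_le (by rwa [dist_comm]) hy')
  have hpk : (0 : ℝ) < (p : ℝ) ^ k := pow_pos (zero_lt_one.trans (one_lt_cast_prime p)) k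
  have hdvd : (p : ℤ) ^ k ∣ (m : ℤ) - m' := by
    rw [dist_eq_norm, ← sub_div, norm_div_p_pow, ← le_div_iff₀' hpk, one_div,
      ← zpow_natCast, ← zpow_neg] at hdist
    exact (Padic.norm_int_le_pow_iff_dvd _ _).1 (by push_cast; exact hdist)
  have hm : (m : ℤ) < (p : ℤ) ^ k := by exact_mod_cast Finset.mem_range.1 hm
  have hm' : (m' : ℤ) < (p : ℤ) ^ k := by exact_mod_cast Finset.mem_range.1 hm'
  have := Int.eq_zero_of_abs_lt_dvd hdvd (by rw [abs_sub_lt_iff]; omega)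
  omega

lemma addHaar_closedBall_pow (μ : Measure ℚ_[p]) [μ.IsAddHaarMeasure] (k : ℕ) :
    μ (closedBall 0 ((p : ℝ) ^ k)) = p ^ k * μ (closedBall 0 1) := by
  rw [closedBall_pow_eq_iUnion, measure_biUnion_finset (pairwiseDisjoint_closedBall_div_pow p k)
    fun _ _ => measurableSet_closedBall]
  simp only [Measure.addHaar_closedBall_center, Finset.sum_const, Finset.card_range, nsmul_eq_mul,
    Nat.cast_pow]

instance : (μp p).IsAddHaarMeasure := by unfold μp; infer_instance

lemma μp_closedBall_pow (k : ℕ) : μp p (closedBall 0 ((p : ℝ) ^ k)) = p ^ k := by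
  rw [addHaar_closedBall_pow, show μp p (closedBall 0 1) = 1 from Measure.addHaarMeasure_self,
    mul_one]

lemma exists_norm_eq_pow_succ {y : ℚ_[p]} (hy : 1 < ‖y‖) : ∃ v : ℕ, ‖y‖ = (p : ℝ) ^ (v + 1) := by
  have hy0 : y ≠ 0 := by rintro rfl; norm_num at hy
  have hval := Padic.norm_eq_zpow_neg_valuation hy0
  have hpos : 0 < -y.valuation := by
    rw [hval] at hy
    exact (one_lt_zpow_iff_right₀ (one_lt_cast_prime p)).1 hy
  refine ⟨(-y.valuation).toNat - 1, ?_⟩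
  rw [hval, ← zpow_natCast]
  congr 1
  omega

lemma sphere_pow_succ_eq_diff (k : ℕ) :
    sphere (0 : ℚ_[p]) ((p : ℝ) ^ (k + 1))
      = closedBall 0 ((p : ℝ) ^ (k + 1)) \ closedBall 0 ((p : ℝ) ^ k) := by
  have hp := one_lt_cast_prime p
  ext y
  simp only [mem_sphere_zero_iff_norm, Set.mem_sdiff, mem_closedBall_zero_iff, not_le]
  constructor
  · intro hy
    exact ⟨hy.le, hy ▸ pow_lt_pow_right₀ hp k.lt_succ_self⟩
  · rintro ⟨hle, hlt⟩
    obtain ⟨v, hv⟩ := exists_norm_eq_pow_succ p ((one_le_pow₀ hp.le).trans_lt hlt)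
    rw [hv] at hle hlt ⊢
    have h₁ := (pow_lt_pow_iff_right₀ hp).1 hlt
    have h₂ := (pow_le_pow_iff_right₀ hp).1 hle
    rw [show v = k by omega]

lemma μp_real_sphere_pow_succ (k : ℕ) :
    (μp p).real (sphere 0 ((p : ℝ) ^ (k + 1))) = (p : ℝ) ^ (k + 1) - (p : ℝ) ^ k := by
  rw [sphere_pow_succ_eq_diff, measureReal_sdiff
      (closedBall_subset_closedBall (pow_le_pow_right₀ (one_lt_cast_prime p).le k.le_succ))
      measurableSet_closedBall (by rw [μp_closedBall_pow]; finiteness),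
    measureReal_def, measureReal_def, μp_closedBall_pow, μp_closedBall_pow]
  simp

lemma annulus_eq_iUnion_sphere (n : ℕ) :
    {y : ℚ_[p] | 1 < ‖y‖ ∧ ‖y‖ ≤ (p : ℝ) ^ n}
      = ⋃ j ∈ Finset.range n, sphere 0 ((p : ℝ) ^ (j + 1)) := by
  have hp := one_lt_cast_prime p
  ext y
  simp only [Set.mem_ofPred_eq, Set.mem_iUnion, Finset.mem_range, mem_sphere_zero_iff_norm]
  constructor
  · rintro ⟨h₁, h₂⟩
    obtain ⟨v, hv⟩ := exists_norm_eq_pow_succ p h₁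
    rw [hv] at h₂
    exact ⟨v, (pow_le_pow_iff_right₀ hp).1 h₂, hv⟩
  · rintro ⟨j, hj, hy⟩
    rw [hy]
    exact ⟨one_lt_pow₀ hp j.succ_ne_zero, pow_le_pow_right₀ hp.le hj⟩

lemma setIntegral_annulus_eq_sum (n : ℕ) (f : ℚ_[p] → ℝ) (c : ℕ → ℝ)
    (hf : ∀ j < n, ∀ y : ℚ_[p], ‖y‖ = (p : ℝ) ^ (j + 1) → f y = c j) :
    ∫ y in {y : ℚ_[p] | 1 < ‖y‖ ∧ ‖y‖ ≤ (p : ℝ) ^ n}, f y ∂μp p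
      = ∑ j ∈ Finset.range n, ((p : ℝ) ^ (j + 1) - (p : ℝ) ^ j) * c j := by
  have hp := one_lt_cast_prime p
  have hdisj : (Finset.range n : Set ℕ).Pairwise
      (Function.onFun Disjoint fun j => sphere (0 : ℚ_[p]) ((p : ℝ) ^ (j + 1))) := by
    intro i _ j _ hij
    refine Set.disjoint_left.2 fun y hi hj => hij ?_
    rw [mem_sphere_zero_iff_norm] at hi hj
    exact Nat.succ_injective (pow_right_injective₀ (zero_lt_one.trans hp) hp.ne' (hi.symm.trans hj))
  have hconst : ∀ j ∈ Finset.range n, Set.EqOn f (fun _ => c j) (sphere 0 ((p : ℝ) ^ (j + 1))) :=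
    fun j hj y hy => hf j (Finset.mem_range.1 hj) y (mem_sphere_zero_iff_norm.1 hy)
  rw [annulus_eq_iUnion_sphere, integral_biUnion_finset _ (fun _ _ => isClosed_sphere.measurableSet)
    hdisj fun j hj => (integrableOn_const (isCompact_sphere 0 _).measure_lt_top.ne).congr_fun
      (hconst j hj).symm isClosed_sphere.measurableSet]
  refine Finset.sum_congr rfl fun j hj => ?_
  rw [setIntegral_congr_fun isClosed_sphere.measurableSet (hconst j hj), setIntegral_const,
    μp_real_sphere_pow_succ, smul_eq_mul]

lemma kernel_shell_value_eq {q u : ℝ} (hq : 1 < q) (hu : 1 < u) (j n : ℕ) :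
    (1 - u) / (1 - (u * q)⁻¹) * (u * q)⁻¹ ^ (j + 1) + (u * q)⁻¹ ^ n * (1 - u) / (1 - u * q)
      = -((u - 1) / (u * q - 1) * ((u * q)⁻¹ ^ j - (u * q)⁻¹ ^ n)) := by
  have huq : 1 < u * q := one_lt_mul_of_lt_of_le hu hq.le
  have h₁ : u * q - 1 ≠ 0 := by linarith
  have h₂ : 1 - u * q ≠ 0 := by linarith
  have h₃ : u * q ≠ 0 := by positivity
  rw [inv_pow, inv_pow, inv_pow, pow_succ]
  field_simp
  ring

lemma shell_term_pos {q u : ℝ} (hq : 1 < q) (hu : 1 < u) {j n : ℕ} (hj : j < n) :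
    0 < (q ^ (j + 1) - q ^ j) * ((u - 1) / (u * q - 1) * ((u * q)⁻¹ ^ j - (u * q)⁻¹ ^ n)) := by
  have huq : 1 < u * q := one_lt_mul_of_lt_of_le hu hq.le
  have hw : (u * q)⁻¹ ^ n < (u * q)⁻¹ ^ j :=
    pow_lt_pow_right_of_lt_one₀ (by positivity) (inv_lt_one_of_one_lt₀ huq) hj
  have hqj : q ^ j < q ^ (j + 1) := pow_lt_pow_right₀ hq j.lt_succ_self
  have hc : 0 < (u - 1) / (u * q - 1) := div_pos (by linarith) (by linarith)
  exact mul_pos (by linarith) (mul_pos hc (by linarith))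

lemma shell_term_le_geom {q u : ℝ} (hq : 1 < q) (hu : 1 < u) (j n : ℕ) :
    (q ^ (j + 1) - q ^ j) * ((u - 1) / (u * q - 1) * ((u * q)⁻¹ ^ j - (u * q)⁻¹ ^ n))
      ≤ (u - 1) * (q - 1) / (u * q - 1) * u⁻¹ ^ j := by
  have huq : 1 < u * q := one_lt_mul_of_lt_of_le hu hq.le
  have hqj : 0 ≤ q ^ (j + 1) - q ^ j := sub_nonneg.2 (pow_le_pow_right₀ hq.le (j.le_add_right 1))
  calc _ ≤ (q ^ (j + 1) - q ^ j) * ((u - 1) / (u * q - 1) * (u * q)⁻¹ ^ j) := by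
        have hc : 0 ≤ (u - 1) / (u * q - 1) := div_nonneg (by linarith) (by linarith)
        gcongr
        exact sub_le_self _ (by positivity)
    _ = (u - 1) * (q - 1) / (u * q - 1) * u⁻¹ ^ j := by
      have : q ≠ 0 := by positivity
      have : u ≠ 0 := by positivity
      rw [inv_pow, inv_pow, mul_pow, pow_succ]
      field_simp

lemma sum_shell_terms_pos_lt_one {q u : ℝ} (hq : 1 < q) (hu : 1 < u) {n : ℕ} (hn : 0 < n) :
    0 < ∑ j ∈ Finset.range n,
        (q ^ (j + 1) - q ^ j) * ((u - 1) / (u * q - 1) * ((u * q)⁻¹ ^ j - (u * q)⁻¹ ^ n)) ∧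
      ∑ j ∈ Finset.range n,
        (q ^ (j + 1) - q ^ j) * ((u - 1) / (u * q - 1) * ((u * q)⁻¹ ^ j - (u * q)⁻¹ ^ n)) < 1 := by
  have huq : 1 < u * q := one_lt_mul_of_lt_of_le hu hq.le
  refine ⟨Finset.sum_pos (fun j hj => shell_term_pos hq hu (Finset.mem_range.1 hj))
    ⟨0, Finset.mem_range.2 hn⟩, ?_⟩
  have hc : 0 ≤ (u - 1) * (q - 1) / (u * q - 1) :=
    div_nonneg (mul_nonneg (by linarith) (by linarith)) (by linarith)
  calc _ ≤ ∑ j ∈ Finset.range n, (u - 1) * (q - 1) / (u * q - 1) * u⁻¹ ^ j :=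
        Finset.sum_le_sum fun j _ => shell_term_le_geom hq hu j n
    _ = (u - 1) * (q - 1) / (u * q - 1) * ∑ j ∈ Finset.Ico 0 n, u⁻¹ ^ j := by
        rw [Finset.mul_sum, Finset.range_eq_Ico]
    _ ≤ (u - 1) * (q - 1) / (u * q - 1) * (u⁻¹ ^ 0 / (1 - u⁻¹)) := by
        gcongr
        exact geom_sum_Ico_le_of_lt_one (by positivity) (inv_lt_one_of_one_lt₀ hu)
    _ = (u * q - u) / (u * q - 1) := by
        have : u - 1 ≠ 0 := by linarith
        have : u * q - 1 ≠ 0 := by linarith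
        field_simp
    _ < 1 := by rw [div_lt_one (by linarith)]; linarith

lemma Kfun_of_norm_eq_pow_succ {α : ℝ} (hα : 0 < α) {n j : ℕ} (hj : j < n) {y : ℚ_[p]}
    (hy : ‖y‖ = (p : ℝ) ^ (j + 1)) :
    Kfun p (-n) α y = -(((p : ℝ) ^ α - 1) / ((p : ℝ) ^ α * p - 1) *
      (((p : ℝ) ^ α * p)⁻¹ ^ j - ((p : ℝ) ^ α * p)⁻¹ ^ n)) := by
  have hp := one_lt_cast_prime p
  have hp0 : (0 : ℝ) < p := zero_lt_one.trans hp
  have hsupp : ‖y‖ ≤ (p : ℝ) ^ (-(-(n : ℤ))) := by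
    rw [neg_neg, zpow_natCast, hy]
    exact pow_le_pow_right₀ hp.le hj
  have hw : (p : ℝ) ^ (-α - 1) = ((p : ℝ) ^ α * p)⁻¹ := by
    rw [show -α - 1 = -(α + 1) by ring, Real.rpow_neg hp0.le, Real.rpow_add_one hp0.ne']
  have hnorm : ‖y‖ ^ (-α - 1) = ((p : ℝ) ^ α * p)⁻¹ ^ (j + 1) := by
    rw [hy, ← Real.rpow_pow_comm hp0.le, hw]
  have hpow : (p : ℝ) ^ (((-(n : ℤ) : ℤ) : ℝ) * (α + 1)) = ((p : ℝ) ^ α * p)⁻¹ ^ n := by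
    rw [show ((-(n : ℤ) : ℤ) : ℝ) * (α + 1) = (-α - 1) * n by push_cast; ring,
      Real.rpow_mul_natCast hp0.le, hw]
  rw [Kfun, if_pos hsupp, hnorm, hpow, hw, Real.rpow_add_one hp0.ne']
  exact kernel_shell_value_eq hp (Real.one_lt_rpow hp hα) j n

theorem stmt1 (α : ℝ) (hα : 0 < α) (r : ℤ) (hr : r < 0) :
    0 < -∫ y in {y : ℚ_[p] | 1 < ‖y‖ ∧ ‖y‖ ≤ (p:ℝ)^(-r)}, Kfun p r α y ∂(μp p) ∧
    -∫ y in {y : ℚ_[p] | 1 < ‖y‖ ∧ ‖y‖ ≤ (p:ℝ)^(-r)}, Kfun p r α y ∂(μp p) < 1 := by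
  obtain ⟨n, rfl⟩ : ∃ n : ℕ, r = -n := ⟨(-r).toNat, by omega⟩
  have hn : 0 < n := by omega
  have hp := one_lt_cast_prime p
  rw [neg_neg, zpow_natCast, setIntegral_annulus_eq_sum p n _ _
    fun j hj y hy => Kfun_of_norm_eq_pow_succ p hα hj hy]
  simp only [mul_neg, Finset.sum_neg_distrib, neg_neg]
  exact sum_shell_terms_pos_lt_one hp (Real.one_lt_rpow hp hα) hn

end
end

section
/- For a prime p, t > 0, α > 0, and integer r, the function Z_r(x,t) := ∫_{ℚ_p} χ(-xξ)·exp(-t·(max(|ξ|_p, p^r)^α - p^{rα})) dξ satisfies ∫_{ℚ_p} Z_r(x,t) dx = 1, and moreover Z_r(x,t) = 0 for |x|_p > p^{-r}, so that ∫_{|x|_p ≤ p^{-r}} Z_r(x,t) dx = 1. -/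
open MeasureTheory Filter Topology

noncomputable section

variable (p : ℕ) [Fact p.Prime]

/-!
The weight `exp(-t(⟨ξ⟩^α - p^{rα}))` depends on `ξ` only through `max(|ξ|_p, p^r)`, so it is
invariant under translation by any `u` with `|u|_p ≤ p^r`. For `|x|_p > p^{-r}` such a `u` can be
chosen with `χ(-xu) ≠ 1`, and translation invariance of Haar measure gives
`Z_r(x,t) = χ(-xu) Z_r(x,t)`, hence `Z_r(x,t) = 0`. On the ball `|x|_p ≤ p^{-r}`, Fubini and
`∫_{|x|_p ≤ p^{-r}} χ(-xξ) dx = p^{-r} 1_{|ξ|_p ≤ p^r}` leave `p^{-r} vol(|ξ|_p ≤ p^r) = 1`, since the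
weight is `1` on that ball. Fubini applies because the weight is integrable: it is at most
`exp(-t(p^{(r+k-1)α} - p^{rα}))` on the shell `p^{r+k-1} < |ξ|_p ≤ p^{r+k}`, of volume `≤ p^{r+k}`.
-/

lemma IsUltrametricDist.max_norm_add_eq {E : Type*} [SeminormedAddCommGroup E] [IsUltrametricDist E]
    {u : E} {ρ : ℝ} (hu : ‖u‖ ≤ ρ) (x : E) : max ‖x + u‖ ρ = max ‖x‖ ρ := by
  refine le_antisymm (max_le ?_ (le_max_right _ _)) (max_le ?_ (le_max_right _ _))
  · exact (norm_add_le_max x u).trans (max_le_max_left _ hu)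
  · calc ‖x‖ = ‖(x + u) + -u‖ := by rw [add_neg_cancel_right]
      _ ≤ max ‖x + u‖ ρ := (norm_add_le_max _ _).trans (max_le_max_left _ (by rwa [norm_neg]))

lemma IsUltrametricDist.norm_add_le_iff {E : Type*} [SeminormedAddCommGroup E] [IsUltrametricDist E]
    {u : E} {ρ : ℝ} (hu : ‖u‖ ≤ ρ) (x : E) : ‖x + u‖ ≤ ρ ↔ ‖x‖ ≤ ρ := by
  rw [← max_eq_right_iff, max_norm_add_eq hu, max_eq_right_iff]

lemma MeasureTheory.integral_eq_zero_of_map_add_eq_smul {G 𝕜 E : Type*} [MeasurableSpace G]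
    [AddGroup G] [MeasurableAdd G] {μ : Measure G} [μ.IsAddRightInvariant] [NormedField 𝕜]
    [NormedAddCommGroup E] [NormedSpace ℝ E] [NormedSpace 𝕜 E] [SMulCommClass ℝ 𝕜 E]
    {f : G → E} {u : G} {c : 𝕜} (hc : c ≠ 1) (hf : ∀ x, f (x + u) = c • f x) :
    ∫ x, f x ∂μ = 0 := by
  have hfix : ∫ x, f x ∂μ = c • ∫ x, f x ∂μ := by
    rw [← integral_smul, ← integral_add_right_eq_self f u]
    simp only [hf]
  have : (c - 1) • ∫ x, f x ∂μ = 0 := by rw [sub_smul, one_smul, ← hfix, sub_self]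
  exact (smul_eq_zero.1 this).resolve_left (sub_ne_zero.2 hc)

lemma summable_pow_mul_exp_neg_mul_pow {a c q : ℝ} (ha : 0 < a) (hc : 0 < c) (hq : 1 < q) :
    Summable fun k : ℕ ↦ a ^ k * Real.exp (-(c * q ^ k)) := by
  have hratio : ∀ k : ℕ, ‖a ^ (k + 1) * Real.exp (-(c * q ^ (k + 1)))‖
      / ‖a ^ k * Real.exp (-(c * q ^ k))‖ = a * Real.exp (-(c * (q - 1) * q ^ k)) := fun k ↦ by
    rw [Real.norm_of_nonneg (by positivity), Real.norm_of_nonneg (by positivity),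
      div_eq_iff (by positivity),
      show -(c * q ^ (k + 1)) = -(c * (q - 1) * q ^ k) + -(c * q ^ k) by ring, Real.exp_add]
    ring
  have hlim : Filter.Tendsto (fun k : ℕ ↦ a * Real.exp (-(c * (q - 1) * q ^ k))) atTop (𝓝 0) := by
    have h := (tendsto_pow_atTop_atTop_of_one_lt hq).const_mul_atTop
      (mul_pos hc (sub_pos.2 hq))
    simpa using (Real.tendsto_exp_atBot.comp (tendsto_neg_atTop_atBot.comp h)).const_mul a
  refine summable_of_ratio_test_tendsto_lt_one zero_lt_one (Eventually.of_forall fun k ↦ ?_)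
    (by simpa only [hratio] using hlim)
  positivity

lemma exists_nat_le_zpow_add_and_zpow_add_sub_one_le_max {b : ℝ} (hb : 1 < b) (r : ℤ) (y : ℝ) :
    ∃ k : ℕ, y ≤ b ^ (r + k) ∧ b ^ (r + k - 1) ≤ max y (b ^ r) := by
  by_cases hy : y ≤ b ^ r
  · exact ⟨0, by simpa using hy,
      le_max_of_le_right (zpow_le_zpow_right₀ hb.le (by omega))⟩
  · replace hy := not_le.1 hy
    obtain ⟨n, hn, hn'⟩ := exists_mem_Ioc_zpow ((zpow_pos (zero_lt_one.trans hb) r).trans hy) hb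
    have hrn : r < n + 1 := (zpow_lt_zpow_iff_right₀ hb).1 (hy.trans_le hn')
    have hk : r + ((n + 1 - r).toNat : ℤ) = n + 1 := by omega
    refine ⟨(n + 1 - r).toNat, by rwa [hk], ?_⟩
    rw [hk, add_sub_cancel_right]
    exact le_max_of_le_left hn.le

section

variable {p}

open Metric Set Padic
open scoped ENNReal

instance inst_s3 : (μp p).IsAddHaarMeasure := Measure.isAddHaarMeasure_addHaarMeasure _

namespace Padic

variable (p) in
lemma one_lt_natCast_prime : (1 : ℝ) < p := by exact_mod_cast (Fact.out : p.Prime).one_lt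

variable (p) in
lemma natCast_prime_pos : (0 : ℝ) < p := zero_lt_one.trans (one_lt_natCast_prime p)

lemma norm_le_inv_of_norm_lt_one {x : ℚ_[p]} (hx : ‖x‖ < 1) : ‖x‖ ≤ (p : ℝ)⁻¹ := by
  simpa using (norm_le_pow_iff_norm_lt_pow_add_one x (-1)).2 (by simpa using hx)

lemma closedBall_zpow_eq_biUnion (n : ℤ) :
    closedBall (0 : ℚ_[p]) ((p : ℝ) ^ n) =
      ⋃ k ∈ Finset.range p, closedBall ((k : ℚ_[p]) * (p : ℚ_[p]) ^ (-n)) ((p : ℝ) ^ (n - 1)) := by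
  have hp : (p : ℝ) ≠ 0 := (natCast_prime_pos p).ne'
  have hpq : (p : ℚ_[p]) ^ n * (p : ℚ_[p]) ^ (-n) = 1 := by
    rw [← zpow_add₀ (by exact_mod_cast hp), add_neg_cancel, zpow_zero]
  ext x
  simp only [mem_iUnion, Finset.mem_range, exists_prop, mem_closedBall, dist_eq_norm, sub_zero]
  constructor
  · intro hx
    have hy : ‖x * (p : ℚ_[p]) ^ n‖ ≤ 1 := by
      rw [norm_mul, norm_p_zpow, zpow_neg, ← div_eq_mul_inv,
        div_le_one (zpow_pos (natCast_prime_pos p) n)]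
      simpa using hx
    obtain ⟨k, hk, hxk⟩ := PadicInt.exists_mem_range ⟨_, hy⟩
    rw [IsLocalRing.mem_maximalIdeal, PadicInt.mem_nonunits, PadicInt.norm_def] at hxk
    refine ⟨k, hk, ?_⟩
    have hsplit : x - k * (p : ℚ_[p]) ^ (-n) = (x * (p : ℚ_[p]) ^ n - k) * (p : ℚ_[p]) ^ (-n) := by
      linear_combination -x * hpq
    rw [hsplit, norm_mul, norm_p_zpow, neg_neg, zpow_sub_one₀ hp, mul_comm ((p : ℝ) ^ n)]
    gcongr
    exact norm_le_inv_of_norm_lt_one hxk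
  · rintro ⟨k, -, hx⟩
    have hk : ‖(k : ℚ_[p]) * (p : ℚ_[p]) ^ (-n)‖ ≤ (p : ℝ) ^ n := by
      rw [norm_mul, norm_p_zpow, neg_neg]
      exact mul_le_of_le_one_left (zpow_pos (natCast_prime_pos p) n).le
        (IsUltrametricDist.norm_natCast_le_one _ k)
    calc ‖x‖ = ‖(x - k * (p : ℚ_[p]) ^ (-n)) + k * (p : ℚ_[p]) ^ (-n)‖ := by rw [sub_add_cancel]
      _ ≤ (p : ℝ) ^ n := (IsUltrametricDist.norm_add_le_max _ _).trans <|
          max_le (hx.trans (zpow_le_zpow_right₀ (one_lt_natCast_prime p).le (by omega))) hk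

lemma pairwiseDisjoint_closedBall_zpow (n : ℤ) :
    (Finset.range p : Set ℕ).PairwiseDisjoint
      fun k ↦ closedBall ((k : ℚ_[p]) * (p : ℚ_[p]) ^ (-n)) ((p : ℝ) ^ (n - 1)) := by
  intro i hi j hj hij
  simp only [Finset.coe_range, mem_Iio] at hi hj
  refine Set.disjoint_left.2 fun x hxi hxj ↦ hij ?_
  rw [mem_closedBall, dist_eq_norm] at hxi hxj
  have hdiff : ‖((i : ℤ) : ℚ_[p]) - (j : ℤ)‖ * (p : ℝ) ^ n ≤ (p : ℝ) ^ (n - 1) := by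
    rw [← neg_neg n, ← norm_p_zpow, ← norm_mul, neg_neg]
    calc ‖(((i : ℤ) : ℚ_[p]) - (j : ℤ)) * (p : ℚ_[p]) ^ (-n)‖
        = ‖(x - j * (p : ℚ_[p]) ^ (-n)) + -(x - i * (p : ℚ_[p]) ^ (-n))‖ := by push_cast; ring_nf
      _ ≤ (p : ℝ) ^ (n - 1) :=
          (IsUltrametricDist.norm_add_le_max _ _).trans (max_le hxj (by rwa [norm_neg]))
  have hlt : ‖(((i : ℤ) - j : ℤ) : ℚ_[p])‖ < 1 := by
    rw [zpow_sub_one₀ (natCast_prime_pos p).ne', mul_comm] at hdiff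
    push_cast
    have := le_of_mul_le_mul_left hdiff (zpow_pos (natCast_prime_pos p) n)
    exact this.trans_lt (inv_lt_one_of_one_lt₀ (one_lt_natCast_prime p))
  rw [norm_intCast_lt_one_iff] at hlt
  have := Int.eq_zero_of_abs_lt_dvd hlt (by rw [abs_lt]; omega)
  omega

lemma μp_closedBall_zpow (n : ℤ) :
    μp p (closedBall 0 ((p : ℝ) ^ n)) = ENNReal.ofReal ((p : ℝ) ^ n) := by
  have hstep : ∀ m : ℤ, μp p (closedBall 0 ((p : ℝ) ^ m))
      = p * μp p (closedBall 0 ((p : ℝ) ^ (m - 1))) := fun m ↦ by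
    rw [closedBall_zpow_eq_biUnion m, measure_biUnion_finset (pairwiseDisjoint_closedBall_zpow m)
      fun _ _ ↦ measurableSet_closedBall]
    simp only [Measure.addHaar_closedBall_center, Finset.sum_const, Finset.card_range, nsmul_eq_mul]
  have hofReal : ∀ m : ℤ, ENNReal.ofReal ((p : ℝ) ^ m)
      = p * ENNReal.ofReal ((p : ℝ) ^ (m - 1)) := fun m ↦ by
    rw [← ENNReal.ofReal_natCast, ← ENNReal.ofReal_mul (natCast_prime_pos p).le, ← zpow_one_add₀
      (natCast_prime_pos p).ne', add_sub_cancel]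
  have hp0 : (p : ℝ≥0∞) ≠ 0 := by exact_mod_cast (Fact.out : p.Prime).ne_zero
  induction n using Int.induction_on with
  | zero =>
    rw [zpow_zero, ENNReal.ofReal_one]
    exact Measure.addHaarMeasure_self
  | succ k ih => rw [hstep, hofReal, add_sub_cancel_right, ih]
  | pred k ih =>
    rw [hstep, hofReal] at ih
    exact (ENNReal.mul_right_inj hp0 (ENNReal.natCast_ne_top p)).1 ih

lemma μp_real_closedBall_zpow (n : ℤ) :
    (μp p).real (closedBall 0 ((p : ℝ) ^ n)) = (p : ℝ) ^ n := by
  rw [measureReal_def, μp_closedBall_zpow,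
    ENNReal.toReal_ofReal (zpow_pos (natCast_prime_pos p) n).le]

variable {χ : AddChar ℚ_[p] ℂ}

lemma norm_addChar_apply (hχ : ∀ y : ℚ_[p], ‖y‖ ≤ 1 → χ y = 1) (y : ℚ_[p]) : ‖χ y‖ = 1 := by
  obtain ⟨k, hk⟩ := pow_unbounded_of_one_lt ‖y‖ (one_lt_natCast_prime p)
  have hpk : ‖(p ^ k : ℕ) • y‖ ≤ 1 := by
    rw [nsmul_eq_mul, norm_mul, Nat.cast_pow, norm_p_pow, zpow_neg, zpow_natCast,
      inv_mul_le_iff₀ (pow_pos (natCast_prime_pos p) k), mul_one]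
    exact hk.le
  have h := congrArg norm (hχ _ hpk)
  rwa [AddChar.map_nsmul_eq_pow, norm_pow, norm_one,
    pow_eq_one_iff_of_nonneg (norm_nonneg _) (pow_ne_zero _ (Fact.out : p.Prime).ne_zero)] at h

lemma continuous_addChar (hχ : ∀ y : ℚ_[p], ‖y‖ ≤ 1 → χ y = 1) : Continuous χ := by
  refine IsLocallyConstant.continuous <| (IsLocallyConstant.iff_eventually_eq _).2 fun y ↦ ?_
  filter_upwards [closedBall_mem_nhds y one_pos] with z hz
  rw [mem_closedBall, dist_eq_norm] at hz
  rw [← add_sub_cancel y z, AddChar.map_add_eq_mul, hχ _ hz, mul_one]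

lemma exists_norm_le_addChar_mul_ne_one (hχ : ∀ y : ℚ_[p], χ y = 1 → ‖y‖ ≤ 1) {n : ℤ}
    {a : ℚ_[p]} (ha : (p : ℝ) ^ (-n) < ‖a‖) : ∃ u : ℚ_[p], ‖u‖ ≤ (p : ℝ) ^ n ∧ χ (a * u) ≠ 1 := by
  have ha0 : a ≠ 0 := norm_pos_iff.1 ((zpow_pos (natCast_prime_pos p) _).trans ha)
  refine ⟨(a * p)⁻¹, ?_, fun h ↦ ?_⟩
  · have ha' : (p : ℝ) ^ (-n + 1) ≤ ‖a‖ := by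
      by_contra! h
      exact ha.not_ge ((norm_le_pow_iff_norm_lt_pow_add_one a (-n)).2 h)
    rw [norm_inv, norm_mul, norm_p, ← div_eq_mul_inv, inv_div,
      div_le_iff₀ ((zpow_pos (natCast_prime_pos p) _).trans_le ha')]
    calc (p : ℝ) = (p : ℝ) ^ n * (p : ℝ) ^ (-n + 1) := by
          rw [← zpow_add₀ (natCast_prime_pos p).ne', add_neg_cancel_left, zpow_one]
      _ ≤ (p : ℝ) ^ n * ‖a‖ := by gcongr
  · have := hχ _ h
    rw [mul_inv, ← mul_assoc, mul_inv_cancel₀ ha0, one_mul, norm_inv, norm_p, inv_inv] at this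
    exact (one_lt_natCast_prime p).not_ge this

lemma integral_addChar_mul_eq_zero (hχ : ∀ y : ℚ_[p], χ y = 1 → ‖y‖ ≤ 1) {n : ℤ} {a : ℚ_[p]}
    (ha : (p : ℝ) ^ (-n) < ‖a‖) {φ : ℚ_[p] → ℂ}
    (hφ : ∀ ξ u, ‖u‖ ≤ (p : ℝ) ^ n → φ (ξ + u) = φ ξ) :
    ∫ ξ, χ (a * ξ) * φ ξ ∂μp p = 0 := by
  obtain ⟨u, hu, hχu⟩ := exists_norm_le_addChar_mul_ne_one hχ ha
  refine integral_eq_zero_of_map_add_eq_smul (u := u) hχu fun ξ ↦ ?_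
  rw [mul_add, AddChar.map_add_eq_mul, hφ ξ u hu, smul_eq_mul]
  ring

lemma setIntegral_closedBall_addChar (hχ : ∀ y : ℚ_[p], χ y = 1 ↔ ‖y‖ ≤ 1) (n : ℤ) (a : ℚ_[p]) :
    ∫ x in closedBall 0 ((p : ℝ) ^ n), χ (x * a) ∂μp p
      = if ‖a‖ ≤ (p : ℝ) ^ (-n) then (((p : ℝ) ^ n : ℝ) : ℂ) else 0 := by
  split_ifs with ha
  · have hone : EqOn (fun x ↦ χ (x * a)) 1 (closedBall 0 ((p : ℝ) ^ n)) := fun x hx ↦ by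
      refine (hχ _).2 ?_
      rw [norm_mul, ← mul_inv_cancel₀ (zpow_pos (natCast_prime_pos p) n).ne', ← zpow_neg]
      exact mul_le_mul (mem_closedBall_zero_iff.1 hx) ha (norm_nonneg _)
        (zpow_pos (natCast_prime_pos p) n).le
    rw [setIntegral_congr_fun measurableSet_closedBall hone, Pi.one_def, setIntegral_const,
      μp_real_closedBall_zpow, Complex.real_smul, mul_one]
  · rw [← integral_indicator measurableSet_closedBall]
    have hind : ∀ x, (closedBall 0 ((p : ℝ) ^ n)).indicator (fun x ↦ χ (x * a)) x
        = χ (a * x) * (closedBall 0 ((p : ℝ) ^ n)).indicator 1 x := fun x ↦ by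
      by_cases hx : x ∈ closedBall (0 : ℚ_[p]) ((p : ℝ) ^ n) <;> simp [hx, mul_comm a]
    simp only [hind]
    refine integral_addChar_mul_eq_zero (fun y ↦ (hχ y).1) (not_le.1 ha) fun ξ u hu ↦ ?_
    classical
    simp only [Set.indicator_apply, mem_closedBall_zero_iff, IsUltrametricDist.norm_add_le_iff hu,
      Pi.one_apply]

end Padic

def heatSymbol (r : ℤ) (α : ℝ) (ξ : ℚ_[p]) : ℝ :=
  max ‖ξ‖ ((p : ℝ) ^ r) ^ α - (p : ℝ) ^ ((r : ℝ) * α)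

lemma heatSymbol_eq_zero_of_norm_le {r : ℤ} (α : ℝ) {ξ : ℚ_[p]} (hξ : ‖ξ‖ ≤ (p : ℝ) ^ r) :
    heatSymbol r α ξ = 0 := by
  rw [heatSymbol, max_eq_right hξ, Real.rpow_intCast_mul (natCast_prime_pos p).le, sub_self]

lemma heatSymbol_add {r : ℤ} (α : ℝ) {u : ℚ_[p]} (hu : ‖u‖ ≤ (p : ℝ) ^ r) (ξ : ℚ_[p]) :
    heatSymbol r α (ξ + u) = heatSymbol r α ξ := by
  rw [heatSymbol, heatSymbol, IsUltrametricDist.max_norm_add_eq hu]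

lemma continuous_heatSymbol (r : ℤ) (α : ℝ) : Continuous (heatSymbol (p := p) r α) :=
  ((continuous_norm.max continuous_const).rpow_const
    fun _ ↦ Or.inl (lt_max_of_lt_right (zpow_pos (natCast_prime_pos p) r)).ne').sub continuous_const

lemma exp_neg_mul_heatSymbol_le {r : ℤ} {α t ρ : ℝ} (hα : 0 ≤ α) (ht : 0 ≤ t) (hρ : 0 ≤ ρ)
    {ξ : ℚ_[p]} (hξ : ρ ≤ max ‖ξ‖ ((p : ℝ) ^ r)) :
    Real.exp (-(t * heatSymbol r α ξ)) ≤ Real.exp (-(t * (ρ ^ α - (p : ℝ) ^ ((r : ℝ) * α)))) := by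
  unfold heatSymbol
  gcongr

lemma summable_exp_neg_mul_rpow_zpow_mul_zpow (r : ℤ) {α t : ℝ} (hα : 0 < α) (ht : 0 < t) :
    Summable fun k : ℕ ↦ Real.exp (-(t * (((p : ℝ) ^ (r + k - 1)) ^ α - (p : ℝ) ^ ((r : ℝ) * α))))
      * (p : ℝ) ^ (r + k) := by
  have hp := natCast_prime_pos p
  have hpow : ∀ k : ℕ, ((p : ℝ) ^ (r + k - 1)) ^ α
      = (p : ℝ) ^ (((r - 1 : ℤ) : ℝ) * α) * ((p : ℝ) ^ α) ^ k := fun k ↦ by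
    rw [← Real.rpow_intCast_mul hp.le, ← Real.rpow_natCast, ← Real.rpow_mul hp.le,
      ← Real.rpow_add hp]
    push_cast
    ring_nf
  have hterm : ∀ k : ℕ, Real.exp (-(t * (((p : ℝ) ^ (r + k - 1)) ^ α - (p : ℝ) ^ ((r : ℝ) * α))))
      * (p : ℝ) ^ (r + k) = Real.exp (t * (p : ℝ) ^ ((r : ℝ) * α)) * (p : ℝ) ^ r *
        ((p : ℝ) ^ k * Real.exp (-(t * (p : ℝ) ^ (((r - 1 : ℤ) : ℝ) * α) * ((p : ℝ) ^ α) ^ k))) :=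
    fun k ↦ by
      rw [hpow, zpow_add₀ hp.ne', zpow_natCast, show ∀ A B P : ℝ,
        -(t * (A * B - P)) = t * P + -(t * A * B) by intros; ring, Real.exp_add]
      ring
  simp only [hterm]
  exact (summable_pow_mul_exp_neg_mul_pow hp (mul_pos ht (Real.rpow_pos_of_pos hp _))
    (Real.one_lt_rpow (one_lt_natCast_prime p) hα)).mul_left _

lemma integrable_exp_neg_mul_heatSymbol (r : ℤ) {α t : ℝ} (hα : 0 < α) (ht : 0 < t) :
    Integrable (fun ξ : ℚ_[p] ↦ Real.exp (-(t * heatSymbol r α ξ))) (μp p) := by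
  have hp := natCast_prime_pos p
  set c : ℕ → ℝ := fun k ↦
    Real.exp (-(t * (((p : ℝ) ^ (r + k - 1)) ^ α - (p : ℝ) ^ ((r : ℝ) * α))))
  have hbound : ∀ ξ : ℚ_[p], ENNReal.ofReal (Real.exp (-(t * heatSymbol r α ξ)))
      ≤ ∑' k : ℕ, (closedBall 0 ((p : ℝ) ^ (r + k))).indicator
          (fun _ ↦ ENNReal.ofReal (c k)) ξ := by
    intro ξ
    obtain ⟨k, hk, hk'⟩ :=
      exists_nat_le_zpow_add_and_zpow_add_sub_one_le_max (one_lt_natCast_prime p) r ‖ξ‖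
    calc ENNReal.ofReal (Real.exp (-(t * heatSymbol r α ξ))) ≤ ENNReal.ofReal (c k) :=
          ENNReal.ofReal_le_ofReal (exp_neg_mul_heatSymbol_le hα.le ht.le (zpow_pos hp _).le hk')
      _ = (closedBall 0 ((p : ℝ) ^ (r + k))).indicator (fun _ ↦ ENNReal.ofReal (c k)) ξ :=
          (indicator_of_mem (mem_closedBall_zero_iff.2 hk) fun _ ↦ ENNReal.ofReal (c k)).symm
      _ ≤ _ := ENNReal.le_tsum k
  have hsummable := summable_exp_neg_mul_rpow_zpow_mul_zpow (p := p) r hα ht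
  refine ⟨((continuous_heatSymbol r α).const_mul t).neg.rexp.aestronglyMeasurable, ?_⟩
  rw [hasFiniteIntegral_iff_ofReal (ae_of_all _ fun _ ↦ (Real.exp_pos _).le)]
  calc ∫⁻ ξ, ENNReal.ofReal (Real.exp (-(t * heatSymbol r α ξ))) ∂μp p
      ≤ ∫⁻ ξ, ∑' k : ℕ, (closedBall 0 ((p : ℝ) ^ (r + k))).indicator
          (fun _ ↦ ENNReal.ofReal (c k)) ξ ∂μp p := lintegral_mono hbound
    _ = ∑' k : ℕ, ENNReal.ofReal (c k * (p : ℝ) ^ (r + k)) := by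
      rw [lintegral_tsum fun k ↦ (measurable_const.indicator measurableSet_closedBall).aemeasurable]
      simp only [lintegral_indicator_const measurableSet_closedBall, μp_closedBall_zpow]
      exact tsum_congr fun k ↦ (ENNReal.ofReal_mul (Real.exp_pos _).le).symm
    _ = ENNReal.ofReal (∑' k : ℕ, c k * (p : ℝ) ^ (r + k)) :=
      (ENNReal.ofReal_tsum_of_nonneg (fun k ↦ by positivity) hsummable).symm
    _ < ⊤ := ENNReal.ofReal_lt_top

variable {χ : AddChar ℚ_[p] ℂ} {r : ℤ} {α t : ℝ}

lemma heatKernel_eq_zero_of_lt_norm (hχ : ∀ y : ℚ_[p], χ y = 1 → ‖y‖ ≤ 1) {x : ℚ_[p]}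
    (hx : (p : ℝ) ^ (-r) < ‖x‖) : heatKernel p χ r α t x = 0 := by
  have h : heatKernel p χ r α t x
      = ∫ ξ, χ (-x * ξ) * Complex.exp (-((t * heatSymbol r α ξ : ℝ) : ℂ)) ∂μp p := by
    simp only [heatKernel, heatSymbol, neg_mul]
  rw [h]
  exact integral_addChar_mul_eq_zero hχ (by rwa [norm_neg]) fun ξ u hu ↦ by
    rw [heatSymbol_add α hu]

lemma integrable_uncurry_addChar_mul_exp_neg_mul_heatSymbol
    (hχ : ∀ y : ℚ_[p], ‖y‖ ≤ 1 → χ y = 1) (hα : 0 < α) (ht : 0 < t) (μ : Measure ℚ_[p])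
    [IsFiniteMeasure μ] :
    Integrable (Function.uncurry fun x ξ ↦
      χ (x * -ξ) * Complex.exp (-((t * heatSymbol r α ξ : ℝ) : ℂ))) (μ.prod (μp p)) := by
  refine ((integrable_const (1 : ℝ)).mul_prod (integrable_exp_neg_mul_heatSymbol r hα ht)).mono'
    ?_ (ae_of_all _ fun z ↦ ?_)
  · exact (((continuous_addChar hχ).comp (continuous_fst.mul continuous_snd.neg)).mul
      (Complex.continuous_exp.comp (Complex.continuous_ofReal.comp (continuous_const.mul
        ((continuous_heatSymbol r α).comp continuous_snd))).neg)).aestronglyMeasurable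
  · rw [Function.uncurry_apply_pair, norm_mul, norm_addChar_apply hχ, ← Complex.ofReal_neg,
      Complex.norm_exp_ofReal, one_mul]

lemma setIntegral_closedBall_heatKernel (hχ : ∀ y : ℚ_[p], χ y = 1 ↔ ‖y‖ ≤ 1) (hα : 0 < α)
    (ht : 0 < t) : ∫ x in closedBall 0 ((p : ℝ) ^ (-r)), heatKernel p χ r α t x ∂μp p = 1 := by
  set w : ℚ_[p] → ℂ := fun ξ ↦ Complex.exp (-((t * heatSymbol r α ξ : ℝ) : ℂ))
  have : IsFiniteMeasure ((μp p).restrict (closedBall 0 ((p : ℝ) ^ (-r)))) :=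
    isFiniteMeasure_restrict.2 (by rw [μp_closedBall_zpow]; exact ENNReal.ofReal_ne_top)
  have hinner : ∀ ξ, ∫ x in closedBall 0 ((p : ℝ) ^ (-r)), χ (x * -ξ) * w ξ ∂μp p
      = (closedBall 0 ((p : ℝ) ^ r)).indicator (fun _ ↦ (((p : ℝ) ^ (-r) : ℝ) : ℂ)) ξ := by
    intro ξ
    rw [integral_mul_const, setIntegral_closedBall_addChar hχ, norm_neg, neg_neg]
    split_ifs with hξ
    · rw [indicator_of_mem (mem_closedBall_zero_iff.2 hξ),
        show w ξ = 1 by simp [w, heatSymbol_eq_zero_of_norm_le α hξ], mul_one]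
    · rw [indicator_of_notMem (fun h ↦ hξ (mem_closedBall_zero_iff.1 h)), zero_mul]
  calc ∫ x in closedBall 0 ((p : ℝ) ^ (-r)), heatKernel p χ r α t x ∂μp p
      = ∫ x in closedBall 0 ((p : ℝ) ^ (-r)), ∫ ξ, χ (x * -ξ) * w ξ ∂μp p ∂μp p := by
        simp only [heatKernel, heatSymbol, w, mul_neg]
    _ = ∫ ξ, ∫ x in closedBall 0 ((p : ℝ) ^ (-r)), χ (x * -ξ) * w ξ ∂μp p ∂μp p :=
        integral_integral_swap (integrable_uncurry_addChar_mul_exp_neg_mul_heatSymbol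
          (fun y ↦ (hχ y).2) hα ht _)
    _ = (μp p).real (closedBall 0 ((p : ℝ) ^ r)) • (((p : ℝ) ^ (-r) : ℝ) : ℂ) := by
        simp only [hinner, integral_indicator_const _ measurableSet_closedBall]
    _ = 1 := by
        rw [μp_real_closedBall_zpow, Complex.real_smul, ← Complex.ofReal_mul,
          ← zpow_add₀ (natCast_prime_pos p).ne', add_neg_cancel, zpow_zero, Complex.ofReal_one]

end

theorem stmt3 (χ : AddChar ℚ_[p] ℂ) (hχ : ∀ y : ℚ_[p], χ y = 1 ↔ ‖y‖ ≤ 1) (r : ℤ) (α t : ℝ) (hα : 0 < α) (ht : 0 < t) :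
    (∫ x, heatKernel p χ r α t x ∂(μp p)) = 1 ∧
    (∀ x : ℚ_[p], (p:ℝ)^(-r) < ‖x‖ → heatKernel p χ r α t x = 0) ∧
    (∫ x in {x : ℚ_[p] | ‖x‖ ≤ (p:ℝ)^(-r)}, heatKernel p χ r α t x ∂(μp p)) = 1 := by
  have hsupport : ∀ x : ℚ_[p], (p : ℝ) ^ (-r) < ‖x‖ → heatKernel p χ r α t x = 0 :=
    fun x ↦ heatKernel_eq_zero_of_lt_norm fun y ↦ (hχ y).1
  have hball := setIntegral_closedBall_heatKernel (r := r) hχ hα ht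
  refine ⟨?_, hsupport, by simpa only [← mem_closedBall_zero_iff, Set.ofPred_mem_eq] using hball⟩
  rw [← setIntegral_eq_integral_of_forall_compl_eq_zero fun x hx ↦
    hsupport x (not_le.1 (mt mem_closedBall_zero_iff.2 hx)), hball]

end
end

section
/- For a prime p, α > 0, integer r, and t, t' > 0, the heat kernel satisfies the semigroup property: (Z_r(·,t) ∗ Z_r(·,t'))(x) = Z_r(x, t+t') for all x ∈ ℚ_p, where ∗ denotes convolution with respect to Haar measure on ℚ_p. -/
open MeasureTheory Filter Topology

noncomputable section

variable (p : ℕ) [Fact p.Prime]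

/-!
`Z_r(·,t)` is the inverse Fourier transform of the symbol `e^{-t(⟨ξ⟩^α - p^{rα})}`, which is
integrable (it decays like `exp (-t ‖ξ‖^α)` while the volume of `‖ξ‖ ≤ p^k` is only `p^k`) and
invariant under translation by the ball `‖u‖ ≤ p^r`. That invariance makes `Z_r(·,t)` vanish
outside `‖x‖ ≤ p^{-r}`: there one can pick such a `u` with `χ(-xu) ≠ 1`. So `Z_r(·,t)` is
continuous with compact support, and Fourier inversion for it reduces to the integral of a
character over a ball. Fubini then turns the convolution into the inverse Fourier transform of the
product of the two symbols, which is the symbol at time `t + t'`.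
-/

namespace PadicHeatKernel

open Metric Set Function Filter

instance : (μp p).IsAddHaarMeasure := Measure.isAddHaarMeasure_addHaarMeasure _

lemma one_lt_prime : (1 : ℝ) < p := by exact_mod_cast (Fact.out : p.Prime).one_lt

lemma prime_pos : (0 : ℝ) < p := zero_lt_one.trans (one_lt_prime p)

variable {p}

lemma max_norm_add_eq {E : Type*} [SeminormedAddCommGroup E] [IsUltrametricDist E]
    {R : ℝ} {u : E} (hu : ‖u‖ ≤ R) (ξ : E) : max ‖ξ + u‖ R = max ‖ξ‖ R := by
  refine le_antisymm (max_le ?_ (le_max_right _ _)) (max_le ?_ (le_max_right _ _))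
  · exact (IsUltrametricDist.norm_add_le_max ξ u).trans (max_le_max le_rfl hu)
  · calc ‖ξ‖ = ‖ξ + u + -u‖ := by rw [add_neg_cancel_right]
      _ ≤ max ‖ξ + u‖ R := (IsUltrametricDist.norm_add_le_max _ _).trans
          (max_le_max le_rfl (by rwa [norm_neg]))

lemma add_mem_closedBall_zero_iff {E : Type*} [SeminormedAddCommGroup E] [IsUltrametricDist E]
    {R : ℝ} {u : E} (hu : ‖u‖ ≤ R) (ξ : E) : ξ + u ∈ closedBall 0 R ↔ ξ ∈ closedBall 0 R := by
  simp only [mem_closedBall_zero_iff, ← max_eq_right_iff, max_norm_add_eq hu]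

lemma integral_eq_zero_of_add_right_eq_mul {G : Type*} [AddGroup G] [MeasurableSpace G]
    [MeasurableAdd G] {μ : Measure G} [μ.IsAddRightInvariant] {F : G → ℂ} {u : G} {c : ℂ}
    (hc : c ≠ 1) (hF : ∀ ξ, F (ξ + u) = c * F ξ) : ∫ ξ, F ξ ∂μ = 0 := by
  have h : ∫ ξ, F ξ ∂μ = c * ∫ ξ, F ξ ∂μ := by
    rw [← integral_const_mul, ← integral_add_right_eq_self F u]
    simp_rw [hF]
  have h' : (1 - c) * ∫ ξ, F ξ ∂μ = 0 := by linear_combination h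
  exact (mul_eq_zero.1 h').resolve_left (sub_ne_zero.2 hc.symm)

lemma summable_pow_mul_exp_neg_mul_pow {a q s : ℝ} (ha : 0 < a) (hq : 1 < q) (hs : 0 < s) :
    Summable fun k : ℕ => a ^ k * Real.exp (-(s * q ^ k)) := by
  refine summable_of_ratio_test_tendsto_lt_one zero_lt_one
    (Eventually.of_forall fun k => by positivity) ?_
  have hratio : ∀ k : ℕ, ‖a ^ (k + 1) * Real.exp (-(s * q ^ (k + 1)))‖ /
      ‖a ^ k * Real.exp (-(s * q ^ k))‖ = a * Real.exp (-(s * (q - 1) * q ^ k)) := fun k => by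
    rw [Real.norm_of_nonneg (by positivity), Real.norm_of_nonneg (by positivity),
      div_eq_iff (by positivity), pow_succ, pow_succ,
      show -(s * (q ^ k * q)) = -(s * (q - 1) * q ^ k) + -(s * q ^ k) by ring, Real.exp_add]
    ring
  simp_rw [hratio]
  have hgrow : Tendsto (fun k : ℕ => s * (q - 1) * q ^ k) atTop atTop :=
    (tendsto_pow_atTop_atTop_of_one_lt hq).const_mul_atTop (by nlinarith)
  simpa using (Real.tendsto_exp_neg_atTop_nhds_zero.comp hgrow).const_mul a

lemma closedBall_zpow_succ_eq_iUnion (n : ℤ) :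
    closedBall (0 : ℚ_[p]) ((p : ℝ) ^ (n + 1)) =
      ⋃ i : Fin p, closedBall ((i : ℚ_[p]) * (p : ℚ_[p]) ^ (-(n + 1))) ((p : ℝ) ^ n) := by
  have hp : (p : ℝ) ≠ 0 := (prime_pos p).ne'
  ext y
  simp only [mem_iUnion, mem_closedBall, dist_eq_norm, sub_zero]
  constructor
  · intro hy
    have hw : ‖y * (p : ℚ_[p]) ^ (n + 1)‖ ≤ 1 := by
      rw [norm_mul, Padic.norm_p_zpow, zpow_neg, ← div_eq_mul_inv]
      exact div_le_one_of_le₀ hy (zpow_nonneg (prime_pos p).le _)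
    set w : ℤ_[p] := ⟨_, hw⟩
    obtain ⟨k, hk, hmem⟩ := PadicInt.exists_mem_range w
    refine ⟨⟨k, hk⟩, ?_⟩
    have hlt : ‖y * (p : ℚ_[p]) ^ (n + 1) - k‖ < (p : ℝ) ^ (-1 + 1 : ℤ) := by
      have h := PadicInt.mem_nonunits.1 ((IsLocalRing.mem_maximalIdeal _).1 hmem)
      rw [← PadicInt.padic_norm_e_of_padicInt, PadicInt.coe_sub, PadicInt.coe_natCast] at h
      simpa using h
    have hle := (Padic.norm_le_pow_iff_norm_lt_pow_add_one _ _).2 hlt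
    calc ‖y - k * (p : ℚ_[p]) ^ (-(n + 1))‖
        = ‖y * (p : ℚ_[p]) ^ (n + 1) - k‖ * (p : ℝ) ^ (n + 1) := by
          rw [← neg_neg (n + 1), ← Padic.norm_p_zpow, ← norm_mul, sub_mul, neg_neg, mul_assoc,
            ← zpow_add₀ (by exact_mod_cast hp), neg_add_cancel, zpow_zero, mul_one]
      _ ≤ (p : ℝ) ^ (-1 : ℤ) * (p : ℝ) ^ (n + 1) :=
          mul_le_mul_of_nonneg_right hle (zpow_nonneg (prime_pos p).le _)
      _ = (p : ℝ) ^ n := by rw [← zpow_add₀ hp]; ring_nf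
  · rintro ⟨i, hi⟩
    have hc : ‖(i : ℚ_[p]) * (p : ℚ_[p]) ^ (-(n + 1))‖ ≤ (p : ℝ) ^ (n + 1) := by
      rw [norm_mul, Padic.norm_p_zpow, neg_neg]
      exact mul_le_of_le_one_left (zpow_nonneg (prime_pos p).le _)
        (IsUltrametricDist.norm_natCast_le_one ℚ_[p] _)
    calc ‖y‖ = ‖(y - i * (p : ℚ_[p]) ^ (-(n + 1))) + i * (p : ℚ_[p]) ^ (-(n + 1))‖ := by
          rw [sub_add_cancel]
      _ ≤ max ((p : ℝ) ^ n) ((p : ℝ) ^ (n + 1)) :=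
          (IsUltrametricDist.norm_add_le_max _ _).trans (max_le_max hi hc)
      _ = (p : ℝ) ^ (n + 1) :=
          max_eq_right (zpow_le_zpow_right₀ (one_lt_prime p).le (by omega))

lemma pairwise_disjoint_closedBall_zpow (n : ℤ) :
    Pairwise (Disjoint on fun i : Fin p =>
      closedBall ((i : ℚ_[p]) * (p : ℚ_[p]) ^ (-(n + 1))) ((p : ℝ) ^ n)) := by
  intro i j hij
  refine (IsUltrametricDist.closedBall_eq_or_disjoint _ _ _).resolve_left fun h => hij ?_
  have hmem : (i : ℚ_[p]) * (p : ℚ_[p]) ^ (-(n + 1)) ∈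
      closedBall ((j : ℚ_[p]) * (p : ℚ_[p]) ^ (-(n + 1))) ((p : ℝ) ^ n) := by
    rw [← h]; exact mem_closedBall_self (zpow_nonneg (prime_pos p).le n)
  rw [mem_closedBall, dist_eq_norm, ← sub_mul, norm_mul, Padic.norm_p_zpow, neg_neg] at hmem
  have hlt : ‖(((i : ℤ) - j : ℤ) : ℚ_[p])‖ < 1 := by
    refine lt_of_mul_lt_mul_right ?_ (zpow_nonneg (prime_pos p).le (n + 1))
    push_cast
    rw [one_mul]
    exact hmem.trans_lt (zpow_lt_zpow_right₀ (one_lt_prime p) (by omega))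
  have hdvd := Padic.norm_intCast_lt_one_iff.1 hlt
  have habs : |(i : ℤ) - j| < p := by
    rw [abs_lt]; constructor <;> omega
  exact Fin.ext (by have := Int.eq_zero_of_abs_lt_dvd hdvd habs; omega)

lemma measureReal_closedBall_zpow_succ (n : ℤ) :
    (μp p).real (closedBall 0 ((p : ℝ) ^ (n + 1))) =
      p * (μp p).real (closedBall 0 ((p : ℝ) ^ n)) := by
  rw [closedBall_zpow_succ_eq_iUnion, measureReal_iUnion_fintype
    (pairwise_disjoint_closedBall_zpow n) (fun _ => measurableSet_closedBall)
    (fun _ => measure_closedBall_lt_top.ne)]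
  simp [measureReal_def, Measure.addHaar_closedBall_center]

lemma measureReal_closedBall_zpow (n : ℤ) :
    (μp p).real (closedBall 0 ((p : ℝ) ^ n)) = (p : ℝ) ^ n := by
  induction n using Int.induction_on with
  | zero =>
    rw [zpow_zero, measureReal_def, ← ENNReal.toReal_one]
    exact congrArg _ (Measure.addHaarMeasure_self (K₀ := padicUnitBall p))
  | succ k ih =>
    rw [measureReal_closedBall_zpow_succ, ih, zpow_add_one₀ (prime_pos p).ne', mul_comm]
  | pred k ih =>
    have h := measureReal_closedBall_zpow_succ (p := p) (-(k : ℤ) - 1)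
    rw [sub_add_cancel, ih] at h
    conv_rhs => rw [zpow_sub_one₀ (prime_pos p).ne']
    rw [eq_mul_inv_iff_mul_eq₀ (prime_pos p).ne', mul_comm]
    exact h.symm

variable {χ : AddChar ℚ_[p] ℂ}

lemma norm_char (hχ : ∀ y : ℚ_[p], χ y = 1 ↔ ‖y‖ ≤ 1) (y : ℚ_[p]) : ‖χ y‖ = 1 := by
  obtain ⟨k, hk⟩ := pow_unbounded_of_one_lt ‖y‖ (one_lt_prime p)
  refine Complex.norm_eq_one_of_pow_eq_one (n := p ^ k) ?_
    (pow_ne_zero _ (Fact.out : p.Prime).ne_zero)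
  rw [← AddChar.map_nsmul_eq_pow, hχ, nsmul_eq_mul, norm_mul, Nat.cast_pow, norm_pow,
    Padic.norm_p, inv_pow]
  exact inv_mul_le_one_of_le₀ hk.le (by positivity)

lemma continuous_char (hχ : ∀ y : ℚ_[p], χ y = 1 ↔ ‖y‖ ≤ 1) : Continuous χ :=
  continuous_iff_continuousAt.2 fun a => continuousAt_const.congr <|
    eventually_of_mem (closedBall_mem_nhds a one_pos) fun ξ hξ => by
      rw [← sub_add_cancel ξ a, AddChar.map_add_eq_mul, (hχ _).2 (mem_closedBall_iff_norm.1 hξ),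
        one_mul]

lemma exists_norm_le_char_ne_one (hχ : ∀ y : ℚ_[p], χ y = 1 ↔ ‖y‖ ≤ 1) {n : ℤ} {x : ℚ_[p]}
    (hx : (p : ℝ) ^ (-n) < ‖x‖) : ∃ u : ℚ_[p], ‖u‖ ≤ (p : ℝ) ^ n ∧ χ (-(x * u)) ≠ 1 := by
  refine ⟨(p : ℚ_[p]) ^ (-n), by rw [Padic.norm_p_zpow, neg_neg], fun h => ?_⟩
  rw [hχ, norm_neg, norm_mul, Padic.norm_p_zpow, neg_neg,
    ← le_div_iff₀ (zpow_pos (prime_pos p) n), one_div, ← zpow_neg] at h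
  exact h.not_gt hx

def invFourier (χ : AddChar ℚ_[p] ℂ) (g : ℚ_[p] → ℂ) (x : ℚ_[p]) : ℂ :=
  ∫ ξ, χ (-(x * ξ)) * g ξ ∂μp p

section InvFourier

variable {g : ℚ_[p] → ℂ} {n : ℤ}

lemma invFourier_eq_zero (hχ : ∀ y : ℚ_[p], χ y = 1 ↔ ‖y‖ ≤ 1)
    (hper : ∀ ξ u, ‖u‖ ≤ (p : ℝ) ^ n → g (ξ + u) = g ξ) {x : ℚ_[p]}
    (hx : (p : ℝ) ^ (-n) < ‖x‖) : invFourier χ g x = 0 := by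
  obtain ⟨u, hu, hχu⟩ := exists_norm_le_char_ne_one hχ hx
  refine integral_eq_zero_of_add_right_eq_mul (u := u) hχu fun ξ => ?_
  rw [hper ξ u hu, mul_add, neg_add, AddChar.map_add_eq_mul]
  ring

lemma setIntegral_closedBall_char (hχ : ∀ y : ℚ_[p], χ y = 1 ↔ ‖y‖ ≤ 1) (n : ℤ) (x : ℚ_[p]) :
    ∫ ξ in closedBall 0 ((p : ℝ) ^ n), χ (-(x * ξ)) ∂μp p =
      if ‖x‖ ≤ (p : ℝ) ^ (-n) then (((p : ℝ) ^ n : ℝ) : ℂ) else 0 := by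
  split_ifs with hx
  · have hone : EqOn (fun ξ => χ (-(x * ξ))) 1 (closedBall 0 ((p : ℝ) ^ n)) := fun ξ hξ => by
      refine (hχ _).2 ?_
      rw [norm_neg, norm_mul, ← mul_inv_cancel₀ (zpow_ne_zero n (prime_pos p).ne'), ← zpow_neg,
        mul_comm ((p : ℝ) ^ n)]
      exact mul_le_mul hx (mem_closedBall_zero_iff.1 hξ) (norm_nonneg _)
        (zpow_nonneg (prime_pos p).le _)
    rw [setIntegral_congr_fun measurableSet_closedBall hone, Pi.one_def, setIntegral_const,
      measureReal_closedBall_zpow, Complex.real_smul, mul_one]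
  · have hper : ∀ ξ u, ‖u‖ ≤ (p : ℝ) ^ n → (closedBall 0 ((p : ℝ) ^ n)).indicator 1 (ξ + u) =
        (closedBall 0 ((p : ℝ) ^ n)).indicator (1 : ℚ_[p] → ℂ) ξ := fun ξ u hu => by
      by_cases hξ : ξ ∈ closedBall (0 : ℚ_[p]) ((p : ℝ) ^ n)
      · rw [indicator_of_mem hξ, indicator_of_mem ((add_mem_closedBall_zero_iff hu ξ).2 hξ)]
        rfl
      · rw [indicator_of_notMem hξ,
          indicator_of_notMem (mt (add_mem_closedBall_zero_iff hu ξ).1 hξ)]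
    rw [← invFourier_eq_zero hχ hper (not_le.1 hx), invFourier,
      ← integral_indicator measurableSet_closedBall]
    congr 1 with ξ
    by_cases hξ : ξ ∈ closedBall (0 : ℚ_[p]) ((p : ℝ) ^ n) <;> simp [hξ]

lemma continuous_invFourier (hχ : ∀ y : ℚ_[p], χ y = 1 ↔ ‖y‖ ≤ 1) (hg : Integrable g (μp p)) :
    Continuous (invFourier χ g) :=
  continuous_of_dominated (bound := fun ξ => ‖g ξ‖)
    (fun x => ((continuous_char hχ).comp (by fun_prop)).aestronglyMeasurable.mul
      hg.aestronglyMeasurable)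
    (fun x => Eventually.of_forall fun ξ => by rw [norm_mul, norm_char hχ, one_mul])
    hg.norm
    (Eventually.of_forall fun ξ => ((continuous_char hχ).comp (by fun_prop)).mul continuous_const)

lemma integrable_invFourier (hχ : ∀ y : ℚ_[p], χ y = 1 ↔ ‖y‖ ≤ 1) (hg : Integrable g (μp p))
    (hper : ∀ ξ u, ‖u‖ ≤ (p : ℝ) ^ n → g (ξ + u) = g ξ) : Integrable (invFourier χ g) (μp p) :=
  (continuous_invFourier hχ hg).integrable_of_hasCompactSupport <|
    HasCompactSupport.intro (isCompact_closedBall 0 ((p : ℝ) ^ (-n))) fun _ hx =>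
      invFourier_eq_zero hχ hper (by simpa using hx)

lemma integral_char_mul_invFourier (hχ : ∀ y : ℚ_[p], χ y = 1 ↔ ‖y‖ ≤ 1)
    (hg : Integrable g (μp p)) (hper : ∀ ξ u, ‖u‖ ≤ (p : ℝ) ^ n → g (ξ + u) = g ξ) (η : ℚ_[p]) :
    ∫ z, χ (z * η) * invFourier χ g z ∂μp p = g η := by
  set B := closedBall (0 : ℚ_[p]) ((p : ℝ) ^ (-n))
  have hsupp : ∫ z, χ (z * η) * invFourier χ g z ∂μp p =
      ∫ z in B, χ (z * η) * invFourier χ g z ∂μp p :=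
    (setIntegral_eq_integral_of_forall_compl_eq_zero fun z hz => by
      rw [invFourier_eq_zero hχ hper (by simpa [B] using hz), mul_zero]).symm
  have hint : Integrable (uncurry fun z ξ => χ (z * η) * (χ (-(z * ξ)) * g ξ))
      (((μp p).restrict B).prod (μp p)) := by
    have : IsFiniteMeasure ((μp p).restrict B) :=
      isFiniteMeasure_restrict.2 measure_closedBall_lt_top.ne
    refine ((integrable_const (1 : ℝ)).mul_prod hg.norm).mono' ?_
      (Eventually.of_forall fun ⟨z, ξ⟩ => ?_)
    · exact (((continuous_char hχ).comp (by fun_prop)).aestronglyMeasurable).mul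
        ((((continuous_char hχ).comp (by fun_prop)).aestronglyMeasurable).mul
          hg.aestronglyMeasurable.comp_snd)
    · simp [norm_char hχ]
  have hconst : EqOn g (fun _ => g η) (closedBall η ((p : ℝ) ^ n)) := fun ξ hξ => by
    rw [← add_sub_cancel η ξ, hper η (ξ - η) (mem_closedBall_iff_norm.1 hξ)]
  calc ∫ z, χ (z * η) * invFourier χ g z ∂μp p
      = ∫ z in B, ∫ ξ, χ (z * η) * (χ (-(z * ξ)) * g ξ) ∂μp p ∂μp p := by
        rw [hsupp]; simp_rw [invFourier, integral_const_mul]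
    _ = ∫ ξ, ∫ z in B, χ (z * η) * (χ (-(z * ξ)) * g ξ) ∂μp p ∂μp p :=
        integral_integral_swap hint
    _ = ∫ ξ, g ξ * ∫ z in B, χ (-((ξ - η) * z)) ∂μp p ∂μp p := by
        congr 1 with ξ
        rw [← integral_const_mul]
        congr 1 with z
        rw [← mul_assoc, ← AddChar.map_add_eq_mul,
          show z * η + -(z * ξ) = -((ξ - η) * z) by ring]
        ring
    _ = ∫ ξ in closedBall η ((p : ℝ) ^ n), g η * (((p : ℝ) ^ (-n) : ℝ) : ℂ) ∂μp p := by
        classical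
        rw [← integral_indicator measurableSet_closedBall]
        congr 1 with ξ
        rw [setIntegral_closedBall_char hχ, neg_neg, indicator_apply, mem_closedBall_iff_norm]
        split_ifs with h
        · rw [hconst (mem_closedBall_iff_norm.2 h)]
        · rw [mul_zero]
    _ = g η := by
        rw [setIntegral_const, measureReal_def, Measure.addHaar_closedBall_center,
          ← measureReal_def, measureReal_closedBall_zpow, Complex.real_smul, ← mul_assoc,
          mul_comm _ (g η), mul_assoc, ← Complex.ofReal_mul, ← zpow_add₀ (prime_pos p).ne',
          add_neg_cancel, zpow_zero, Complex.ofReal_one, mul_one]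

lemma integral_invFourier_sub_mul_invFourier (hχ : ∀ y : ℚ_[p], χ y = 1 ↔ ‖y‖ ≤ 1)
    {g₁ g₂ : ℚ_[p] → ℂ} (hg₁ : Integrable g₁ (μp p))
    (hper : ∀ ξ u, ‖u‖ ≤ (p : ℝ) ^ n → g₁ (ξ + u) = g₁ ξ) (hg₂ : Integrable g₂ (μp p))
    (x : ℚ_[p]) :
    ∫ y, invFourier χ g₁ (x - y) * invFourier χ g₂ y ∂μp p = invFourier χ (g₁ * g₂) x := by
  set f₁ := invFourier χ g₁
  have hint : Integrable (uncurry fun y ξ => f₁ (x - y) * (χ (-(y * ξ)) * g₂ ξ))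
      ((μp p).prod (μp p)) := by
    refine (((integrable_invFourier hχ hg₁ hper).comp_sub_left x).norm.mul_prod
      hg₂.norm).mono' ?_ (Eventually.of_forall fun ⟨y, ξ⟩ => ?_)
    · exact (((continuous_invFourier hχ hg₁).comp (by fun_prop)).aestronglyMeasurable).mul
        ((((continuous_char hχ).comp (by fun_prop)).aestronglyMeasurable).mul
          hg₂.aestronglyMeasurable.comp_snd)
    · simp [f₁, norm_char hχ]
  calc ∫ y, f₁ (x - y) * invFourier χ g₂ y ∂μp p
      = ∫ y, ∫ ξ, f₁ (x - y) * (χ (-(y * ξ)) * g₂ ξ) ∂μp p ∂μp p := by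
        congr 1 with y
        rw [invFourier, integral_const_mul]
    _ = ∫ ξ, ∫ y, f₁ (x - y) * (χ (-(y * ξ)) * g₂ ξ) ∂μp p ∂μp p :=
        integral_integral_swap hint
    _ = ∫ ξ, χ (-(x * ξ)) * (g₁ * g₂) ξ ∂μp p := by
        congr 1 with ξ
        have hsub : ∀ y, f₁ (x - y) * (χ (-(y * ξ)) * g₂ ξ) =
            χ (-(x * ξ)) * g₂ ξ * (χ ((x - y) * ξ) * f₁ (x - y)) := fun y => by
          rw [show -(y * ξ) = -(x * ξ) + (x - y) * ξ by ring, AddChar.map_add_eq_mul]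
          ring
        simp_rw [hsub]
        rw [integral_sub_left_eq_self (fun z => χ (-(x * ξ)) * g₂ ξ * (χ (z * ξ) * f₁ z)),
          integral_const_mul, integral_char_mul_invFourier hχ hg₁ hper, Pi.mul_apply]
        ring

end InvFourier

lemma exists_max_norm_eq_zpow (r : ℤ) (ξ : ℚ_[p]) :
    ∃ k : ℕ, max ‖ξ‖ ((p : ℝ) ^ r) = (p : ℝ) ^ (r + k) := by
  rcases le_or_gt ‖ξ‖ ((p : ℝ) ^ r) with h | h
  · exact ⟨0, by simp [h]⟩
  · have hξ : ξ ≠ 0 := by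
      rintro rfl
      exact (zpow_pos (prime_pos p) r).not_ge (by simpa using h.le)
    rw [Padic.norm_eq_zpow_neg_valuation hξ] at h ⊢
    have hr : r < -ξ.valuation := (zpow_lt_zpow_iff_right₀ (one_lt_prime p)).1 h
    refine ⟨(-ξ.valuation - r).toNat, ?_⟩
    rw [max_eq_left h.le]
    congr 1
    omega

def heatSymbol (r : ℤ) (α t : ℝ) (ξ : ℚ_[p]) : ℝ :=
  Real.exp (-(t * (max ‖ξ‖ ((p : ℝ) ^ r) ^ α - (p : ℝ) ^ ((r : ℝ) * α))))

variable {r : ℤ} {α : ℝ}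

lemma heatKernel_eq_invFourier (χ : AddChar ℚ_[p] ℂ) (t : ℝ) :
    heatKernel p χ r α t = invFourier χ (fun ξ => (heatSymbol r α t ξ : ℂ)) := by
  ext x
  simp only [heatKernel, invFourier, heatSymbol, Complex.ofReal_exp, Complex.ofReal_neg]

lemma heatSymbol_pos (t : ℝ) (ξ : ℚ_[p]) : 0 < heatSymbol r α t ξ := Real.exp_pos _

lemma heatSymbol_add_time (t t' : ℝ) (ξ : ℚ_[p]) :
    heatSymbol r α (t + t') ξ = heatSymbol r α t ξ * heatSymbol r α t' ξ := by
  rw [heatSymbol, heatSymbol, heatSymbol, ← Real.exp_add]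
  ring_nf

lemma heatSymbol_add_of_norm_le {t : ℝ} {u : ℚ_[p]} (hu : ‖u‖ ≤ (p : ℝ) ^ r) (ξ : ℚ_[p]) :
    heatSymbol r α t (ξ + u) = heatSymbol r α t ξ := by
  rw [heatSymbol, heatSymbol, max_norm_add_eq hu]

lemma continuous_heatSymbol (t : ℝ) : Continuous (heatSymbol (p := p) r α t) := by
  refine Real.continuous_exp.comp (Continuous.neg (continuous_const.mul
    (Continuous.sub ?_ continuous_const)))
  exact (continuous_norm.max continuous_const).rpow_const fun ξ =>
    Or.inl ((zpow_pos (prime_pos p) r).trans_le (le_max_right _ _)).ne'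

lemma summable_exp_neg_zpow_rpow_mul_zpow (hα : 0 < α) {t : ℝ} (ht : 0 < t) :
    Summable fun k : ℕ => Real.exp (-(t * (((p : ℝ) ^ (r + k)) ^ α -
      (p : ℝ) ^ ((r : ℝ) * α)))) * (p : ℝ) ^ (r + k) := by
  set c := (p : ℝ) ^ ((r : ℝ) * α)
  have hq : (1 : ℝ) < (p : ℝ) ^ α := Real.one_lt_rpow (one_lt_prime p) hα
  refine ((summable_pow_mul_exp_neg_mul_pow (prime_pos p) hq
    (mul_pos ht (Real.rpow_pos_of_pos (prime_pos p) ((r : ℝ) * α)))).mul_left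
    (Real.exp (t * c) * (p : ℝ) ^ r)).congr fun k => ?_
  have hpow : ((p : ℝ) ^ (r + k)) ^ α = c * ((p : ℝ) ^ α) ^ k := by
    rw [← Real.rpow_intCast, ← Real.rpow_mul (prime_pos p).le,
      ← Real.rpow_mul_natCast (prime_pos p).le, ← Real.rpow_add (prime_pos p)]
    push_cast; ring_nf
  rw [hpow, zpow_add₀ (prime_pos p).ne', zpow_natCast,
    show -(t * (c * ((p : ℝ) ^ α) ^ k - c)) = t * c + -(t * c * ((p : ℝ) ^ α) ^ k) by ring,
    Real.exp_add]
  ring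

lemma integrable_heatSymbol (hα : 0 < α) {t : ℝ} (ht : 0 < t) :
    Integrable (heatSymbol (p := p) r α t) (μp p) := by
  set a : ℕ → ℝ := fun k => Real.exp (-(t * (((p : ℝ) ^ (r + k)) ^ α - (p : ℝ) ^ ((r : ℝ) * α))))
  set B : ℕ → Set ℚ_[p] := fun k => closedBall 0 ((p : ℝ) ^ (r + k))
  have hle : ∀ ξ, ENNReal.ofReal (heatSymbol r α t ξ) ≤
      ∑' k, (B k).indicator (fun _ => ENNReal.ofReal (a k)) ξ := fun ξ => by
    obtain ⟨k, hk⟩ := exists_max_norm_eq_zpow r ξ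
    refine le_trans (le_of_eq ?_) (ENNReal.le_tsum k)
    rw [indicator_of_mem (mem_closedBall_zero_iff.2 (hk ▸ le_max_left _ _)), heatSymbol, hk]
  refine ⟨(continuous_heatSymbol t).aestronglyMeasurable, ?_⟩
  rw [hasFiniteIntegral_iff_ofReal (Eventually.of_forall fun ξ => (heatSymbol_pos t ξ).le)]
  calc ∫⁻ ξ, ENNReal.ofReal (heatSymbol r α t ξ) ∂μp p
      ≤ ∫⁻ ξ, ∑' k, (B k).indicator (fun _ => ENNReal.ofReal (a k)) ξ ∂μp p := lintegral_mono hle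
    _ = ∑' k, ENNReal.ofReal (a k * (p : ℝ) ^ (r + k)) := by
        rw [lintegral_tsum fun k =>
          (measurable_const.indicator measurableSet_closedBall).aemeasurable]
        congr 1 with k
        rw [lintegral_indicator_const measurableSet_closedBall,
          ← ofReal_measureReal measure_closedBall_lt_top.ne, measureReal_closedBall_zpow,
          ENNReal.ofReal_mul (Real.exp_pos _).le]
    _ < ⊤ := by
        rw [← ENNReal.ofReal_tsum_of_nonneg (fun k => by positivity)
          (summable_exp_neg_zpow_rpow_mul_zpow hα ht)]
        exact ENNReal.ofReal_lt_top

end PadicHeatKernel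

open PadicHeatKernel

theorem stmt4 (χ : AddChar ℚ_[p] ℂ) (hχ : ∀ y : ℚ_[p], χ y = 1 ↔ ‖y‖ ≤ 1) (r : ℤ) (α t t' : ℝ) (hα : 0 < α) (ht : 0 < t) (ht' : 0 < t')
    (x : ℚ_[p]) :
    (∫ y, heatKernel p χ r α t (x-y) * heatKernel p χ r α t' y ∂(μp p))
      = heatKernel p χ r α (t+t') x := by
  have hper : ∀ ξ u : ℚ_[p], ‖u‖ ≤ (p : ℝ) ^ r →
      (heatSymbol r α t (ξ + u) : ℂ) = heatSymbol r α t ξ := fun ξ u hu => by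
    rw [heatSymbol_add_of_norm_le hu]
  simp only [heatKernel_eq_invFourier]
  refine (integral_invFourier_sub_mul_invFourier hχ ?_ hper ?_ x).trans ?_
  · exact (integrable_heatSymbol hα ht).ofReal
  · exact (integrable_heatSymbol hα ht').ofReal
  congr 1 with ξ
  simp [heatSymbol_add_time]

end
end

section
/- For a prime p, α > 0, integer r, t > 0, a compact set B ⊂ ℚ_p, and P(t,x,B) := ∫_B Z_r(x-y,t) dy: for each u ≥ 0, lim_{|x|_p → ∞} sup_{0 < t ≤ u} P(t,x,B) = 0. -/
open MeasureTheory Filter Topology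

noncomputable section

variable (p : ℕ) [Fact p.Prime]

/-- The heat kernel vanishes identically at points of norm at least `p^(1-r)`. -/
lemma heatKernel_eq_zero_of_large_norm (χ : AddChar ℚ_[p] ℂ)
    (hχ : ∀ y : ℚ_[p], χ y = 1 ↔ ‖y‖ ≤ 1) (r : ℤ) (α t : ℝ) (z : ℚ_[p])
    (hz : (p:ℝ)^(1-r) ≤ ‖z‖) : heatKernel p χ r α t z = 0 := by
  have hp1 : (1:ℝ) < p := by exact_mod_cast (Fact.out : p.Prime).one_lt
  have hp0 : (0:ℝ) < p := by linarith
  have hz0 : z ≠ 0 := by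
    intro h
    rw [h, norm_zero] at hz
    exact absurd hz (not_le.2 (zpow_pos hp0 _))
  have hpz0 : ((p:ℚ_[p]) : ℚ_[p]) ≠ 0 := by
    exact_mod_cast (Nat.cast_ne_zero (R := ℚ_[p])).2 (Fact.out : p.Prime).ne_zero
  set ξ₀ : ℚ_[p] := z⁻¹ * ((p:ℚ_[p]))⁻¹ with hξ₀
  have hnormp : ‖(p:ℚ_[p])‖ = (p:ℝ)⁻¹ := by exact_mod_cast Padic.norm_p
  have hξ₀norm : ‖ξ₀‖ = ‖z‖⁻¹ * (p:ℝ) := by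
    rw [hξ₀, norm_mul, norm_inv, norm_inv, hnormp, inv_inv]
  have hznorm_pos : (0:ℝ) < ‖z‖ := norm_pos_iff.2 hz0
  have hξ₀le : ‖ξ₀‖ ≤ (p:ℝ)^r := by
    rw [hξ₀norm]
    have h1 : ‖z‖⁻¹ ≤ ((p:ℝ)^(1-r))⁻¹ := by
      exact inv_anti₀ (zpow_pos hp0 _) hz
    calc ‖z‖⁻¹ * (p:ℝ) ≤ ((p:ℝ)^(1-r))⁻¹ * (p:ℝ) := by
          exact mul_le_mul_of_nonneg_right h1 (le_of_lt hp0)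
      _ = (p:ℝ)^r := by
          rw [zpow_sub₀ (ne_of_gt hp0), zpow_one]
          field_simp
  have hzξ₀ : ‖z * ξ₀‖ = (p:ℝ) := by
    rw [hξ₀, show z * (z⁻¹ * ((p:ℚ_[p]))⁻¹) = (z * z⁻¹) * ((p:ℚ_[p]))⁻¹ by ring,
      mul_inv_cancel₀ hz0, one_mul, norm_inv, hnormp, inv_inv]
  have hχne : χ (-(z * ξ₀)) ≠ 1 := by
    intro h
    have := (hχ _).1 h
    rw [norm_neg, hzξ₀] at this
    linarith
  -- the radial factor is invariant under translation by ξ₀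
  have hmax : ∀ ξ : ℚ_[p], max ‖ξ + ξ₀‖ ((p:ℝ)^r) = max ‖ξ‖ ((p:ℝ)^r) := by
    intro ξ
    rcases le_or_gt ‖ξ‖ ((p:ℝ)^r) with h | h
    · have h1 : ‖ξ + ξ₀‖ ≤ (p:ℝ)^r :=
        le_trans (Padic.nonarchimedean ξ ξ₀) (max_le h hξ₀le)
      rw [max_eq_right h1, max_eq_right h]
    · have hne : ‖ξ‖ ≠ ‖ξ₀‖ := ne_of_gt (lt_of_le_of_lt hξ₀le h)
      have h1 : ‖ξ + ξ₀‖ = ‖ξ‖ := by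
        rw [Padic.add_eq_max_of_ne hne, max_eq_left (le_of_lt (lt_of_le_of_lt hξ₀le h))]
      rw [h1]
  set E : ℚ_[p] → ℂ := fun ξ =>
    Complex.exp (-((t * ((max ‖ξ‖ ((p:ℝ)^r)) ^ α - (p:ℝ) ^ ((r:ℝ)*α)) : ℝ) : ℂ)) with hE
  have hEinv : ∀ ξ, E (ξ + ξ₀) = E ξ := by
    intro ξ
    simp only [hE, hmax ξ]
  haveI : (μp p).IsAddRightInvariant := by
    unfold μp; infer_instance
  have key : heatKernel p χ r α t z = χ (-(z * ξ₀)) * heatKernel p χ r α t z := by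
    conv_lhs => rw [heatKernel]
    rw [show (∫ ξ, χ (-(z*ξ)) * E ξ ∂(μp p)) = ∫ ξ, χ (-(z*(ξ+ξ₀))) * E (ξ+ξ₀) ∂(μp p) from
      (integral_add_right_eq_self (fun ξ => χ (-(z*ξ)) * E ξ) ξ₀).symm]
    rw [heatKernel, ← integral_const_mul]
    congr 1
    funext ξ
    have : -(z*(ξ+ξ₀)) = -(z*ξ) + -(z*ξ₀) := by ring
    rw [hEinv ξ, this, AddChar.map_add_eq_mul]
    ring
  have h2 : (χ (-(z * ξ₀)) - 1) * heatKernel p χ r α t z = 0 := by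
    rw [sub_mul, one_mul, ← key, sub_self]
  rcases mul_eq_zero.1 h2 with h | h
  · exact absurd (sub_eq_zero.1 h) hχne
  · exact h

theorem stmt12 (χ : AddChar ℚ_[p] ℂ) (hχ : ∀ y : ℚ_[p], χ y = 1 ↔ ‖y‖ ≤ 1) (r : ℤ) (α : ℝ) (hα : 0 < α)
    (B : Set ℚ_[p]) (hB : IsCompact B) (u : ℝ) (hu : 0 ≤ u) :
    Tendsto (fun x : ℚ_[p] => ⨆ t ∈ Set.Ioc (0:ℝ) u,
        (∫ y in B, heatKernel p χ r α t (x-y) ∂(μp p)).re)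
      (Filter.comap norm Filter.atTop) (𝓝 0) := by
  obtain ⟨C, hC⟩ := hB.isBounded.subset_closedBall 0
  set M : ℝ := max C ((p:ℝ)^(1-r)) with hM
  have hev : ∀ᶠ x : ℚ_[p] in comap norm atTop, M < ‖x‖ :=
    tendsto_comap.eventually (eventually_gt_atTop M)
  have heq : ∀ᶠ x : ℚ_[p] in comap norm atTop,
      (⨆ t ∈ Set.Ioc (0:ℝ) u, (∫ y in B, heatKernel p χ r α t (x-y) ∂(μp p)).re) = 0 := by
    filter_upwards [hev] with x hx
    have hint : ∀ t : ℝ, (∫ y in B, heatKernel p χ r α t (x-y) ∂(μp p)) = 0 := by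
      intro t
      have : ∀ y ∈ B, heatKernel p χ r α t (x-y) = 0 := by
        intro y hy
        have hyC : ‖y‖ ≤ C := by
          simpa using hC hy
        have hxy : ‖x - y‖ = ‖x‖ := by
          have hne : ‖x‖ ≠ ‖-y‖ := by
            rw [norm_neg]
            exact ne_of_gt (lt_of_le_of_lt hyC (lt_of_le_of_lt (le_max_left _ _) hx))
          rw [sub_eq_add_neg, Padic.add_eq_max_of_ne hne, norm_neg,
            max_eq_left (le_of_lt (lt_of_le_of_lt hyC (lt_of_le_of_lt (le_max_left _ _) hx)))]
        apply heatKernel_eq_zero_of_large_norm p χ hχ r α t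
        rw [hxy]
        exact le_of_lt (lt_of_le_of_lt (le_max_right _ _) hx)
      calc (∫ y in B, heatKernel p χ r α t (x-y) ∂(μp p))
          = ∫ y in B, (0:ℂ) ∂(μp p) :=
            setIntegral_congr_fun hB.measurableSet this
        _ = 0 := by simp
    have : ∀ t ∈ Set.Ioc (0:ℝ) u,
        (∫ y in B, heatKernel p χ r α t (x-y) ∂(μp p)).re = (0:ℝ) := by
      intro t _
      rw [hint t]
      simp
    rw [biSup_congr this]
    simp
  rw [tendsto_congr' heq]
  exact tendsto_const_nhds

end
end
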